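/- Let A ⊂ ℤⁿ be a finite set with 0 in the interior of Q = conv(A), let F be a proper face of Q with A_F := A ∩ F nonempty, and let g : ℝⁿ∖{0} → ℝⁿ be continuous and positively homogeneous of degree 1 (g(t·p) = t·g(p) for t > 0) such that for every p ∈ cone(F) := {t·u : t > 0, u ∈ F} one has max_{α ∈ A∖A_F} ⟨α, g(p)⟩ < max_{β ∈ A_F} ⟨β, g(p)⟩. Let c : A → ℂ be coefficients with c_α ≠ 0 for all α and c_β a positive real number for every β ∈ A_F. Then there exist constants δ > 0 and C > 0 such that for every p ∈ cone(F) and every θ ∈ ℝⁿ with ⟨β, θ⟩ ∈ ℤ for all β ∈ A_F, the partial sum W_{A_F}(g(p), θ) = Σ_{β ∈ A_F} c_β · exp(⟨β, g(p)⟩) is a positive real number and |W(g(p), θ) − W_{A_F}(g(p), θ)| ≤ C · exp(−δ·‖p‖) · W_{A_F}(g(p), θ). -/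

import Mathlib

attribute [local instance] Classical.propDecidable

noncomputable section

/-- The coercion of an integer vector to a real vector. -/
def toR {n : ℕ} (a : Fin n → ℤ) : Fin n → ℝ := fun i => (a i : ℝ)

/-- The pairing `⟨a, x⟩ = Σᵢ aᵢ xᵢ` of an integer vector with a real vector. -/
def dotZ {n : ℕ} (a : Fin n → ℤ) (x : Fin n → ℝ) : ℝ := ∑ i, (a i : ℝ) * x i

/-- `W_B(x, θ) = Σ_{α ∈ B} c_α · exp(⟨α, x⟩ + 2πi⟨α, θ⟩)`. -/
def Wpot {n : ℕ} (B : Finset (Fin n → ℤ)) (c : (Fin n → ℤ) → ℂ) (x θ : Fin n → ℝ) : ℂ :=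
  ∑ α ∈ B, c α * Complex.exp ((dotZ α x : ℂ) + 2 * (Real.pi : ℂ) * Complex.I * (dotZ α θ : ℂ))

/-- The open cone `{t·u : t > 0, u ∈ F}` over a set `F ⊆ ℝⁿ`. -/
def cone {n : ℕ} (F : Set (Fin n → ℝ)) : Set (Fin n → ℝ) :=
  {p | ∃ t : ℝ, 0 < t ∧ ∃ u ∈ F, p = t • u}

/-!
Since `0` is interior to `Q`, the proper face `F` misses `0`; and `F`, being a union of convex
hulls of subsets of `A`, is compact. Homogeneity of `g` then turns the pointwise gap between
`max_{β ∈ A_F} ⟨β, g p⟩` and `⟨α, g p⟩`, `α ∉ A_F`, into a gap of at least `δ‖p‖` on `cone(F)`,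
with `δ = min_F (gap) / max_F ‖u‖`. When `⟨β, θ⟩ ∈ ℤ` on `A_F`, all terms of
`W_{A_F}` are positive reals, so `W_{A_F} ≥ (min c_β) · exp(max ⟨β, g p⟩)`, while each remaining
term of `W` has modulus at most `|c_α| · exp(max ⟨β, g p⟩ - δ‖p‖)`.
-/

open Filter Topology

section Extreme

variable {E : Type*} [AddCommGroup E] [Module ℝ E]

lemma mem_openSegment_add_smul_sub (x z : E) {ε : ℝ} (hε : 0 < ε) :
    x ∈ openSegment ℝ z (x + ε • (x - z)) := by
  refine ⟨ε / (1 + ε), 1 / (1 + ε), by positivity, by positivity, by field_simp; ring, ?_⟩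
  match_scalars
  · field_simp; ring
  · field_simp

lemma IsExtreme.mem_of_add_smul_sub_mem {A B : Set E} (h : IsExtreme ℝ A B) {x z : E}
    (hx : x ∈ B) (hz : z ∈ A) {ε : ℝ} (hε : 0 < ε) (hxz : x + ε • (x - z) ∈ A) : z ∈ B :=
  h.2 hz hxz hx (mem_openSegment_add_smul_sub x z hε)

lemma IsExtreme.subset_of_mem_interior [TopologicalSpace E] [IsTopologicalAddGroup E]
    [ContinuousSMul ℝ E] {A B : Set E} (h : IsExtreme ℝ A B) {x : E} (hxB : x ∈ B)
    (hxA : x ∈ interior A) : A ⊆ B := by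
  intro z hz
  have hline : Tendsto (fun ε : ℝ => x + ε • (x - z)) (𝓝 0) (𝓝 x) :=
    (by fun_prop : Continuous fun ε : ℝ => x + ε • (x - z)).tendsto' 0 x (by simp)
  obtain ⟨ε, hεA, hε⟩ := (((hline.eventually_mem (mem_interior_iff_mem_nhds.1 hxA)).filter_mono
    nhdsWithin_le_nhds).and (self_mem_nhdsWithin (s := Set.Ioi 0))).exists
  exact h.mem_of_add_smul_sub_mem hxB hz hε hεA

lemma IsExtreme.convexHull_subset {A B : Set E} (h : IsExtreme ℝ A B) (hA : Convex ℝ A)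
    {S : Finset E} (hSA : (S : Set E) ⊆ A) {w : E → ℝ} (hw : ∀ y ∈ S, 0 < w y)
    (hw1 : ∑ y ∈ S, w y = 1) (hB : ∑ y ∈ S, w y • y ∈ B) : convexHull ℝ (S : Set E) ⊆ B := by
  have hS : S.Nonempty := Finset.nonempty_of_sum_ne_zero (hw1 ▸ one_ne_zero)
  have hm : 0 < S.inf' hS w := (Finset.lt_inf'_iff _).2 hw
  intro z hz
  refine h.mem_of_add_smul_sub_mem hB (convexHull_min hSA hA hz) hm (convexHull_min hSA hA ?_)
  obtain ⟨μ, hμ0, hμ1, rfl⟩ := Finset.mem_convexHull'.1 hz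
  -- with `m = min w`, the point `x + m • (x - z)` has the nonnegative coordinates `w + m • (w - μ)`
  refine Finset.mem_convexHull'.2 ⟨fun y => w y + S.inf' hS w * (w y - μ y), fun y hy => ?_, ?_, ?_⟩
  · have hmw : S.inf' hS w ≤ w y := Finset.inf'_le _ hy
    have hμ : μ y ≤ 1 := hμ1 ▸ Finset.single_le_sum hμ0 hy
    nlinarith [hμ0 y hy]
  · simp [Finset.sum_add_distrib, ← Finset.mul_sum, hw1, hμ1]
  · simp [add_smul, mul_smul, sub_smul, Finset.sum_add_distrib, ← Finset.smul_sum]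

lemma IsExtreme.isCompact_of_convexHull_finset [TopologicalSpace E] [IsTopologicalAddGroup E]
    [ContinuousSMul ℝ E] {V : Finset E} {F : Set E} (h : IsExtreme ℝ (convexHull ℝ ↑V) F) :
    IsCompact F := by
  classical
  have hF : F = ⋃ (S : Finset E)
      (_ : S ∈ V.powerset.filter fun S : Finset E => convexHull ℝ (S : Set E) ⊆ F),
      convexHull ℝ (S : Set E) := by
    refine subset_antisymm (fun x hx => ?_)
      (Set.iUnion₂_subset fun S hS => (Finset.mem_filter.1 hS).2)
    obtain ⟨w, hw0, hw1, hwx⟩ := Finset.mem_convexHull'.1 (h.1 hx)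
    set S := V.filter fun y => w y ≠ 0
    have hS1 : ∑ y ∈ S, w y = 1 := by rw [Finset.sum_filter_ne_zero, hw1]
    have hSx : ∑ y ∈ S, w y • y = x := by
      rw [Finset.sum_filter_of_ne (p := fun y => w y ≠ 0)
        fun y _ hy hw => hy (by rw [hw, zero_smul]), hwx]
    have hSV : S ⊆ V := Finset.filter_subset _ _
    have hSF : convexHull ℝ ↑S ⊆ F :=
      h.convexHull_subset (convex_convexHull ℝ _)
        ((Finset.coe_subset.2 hSV).trans (subset_convexHull ℝ _))
        (fun y hy => (hw0 y (hSV hy)).lt_of_ne' (Finset.mem_filter.1 hy).2) hS1 (hSx ▸ hx)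
    exact Set.mem_biUnion (Finset.mem_filter.2 ⟨Finset.mem_powerset.2 hSV, hSF⟩)
      (Finset.mem_convexHull'.2 ⟨w, fun y hy => hw0 y (hSV hy), hS1, hSx⟩)
  rw [hF]
  exact Finset.isCompact_biUnion _ fun S _ => S.finite_toSet.isCompact_convexHull (𝕜 := ℝ)

end Extreme

lemma IsCompact.eventually_mul_norm_le {E : Type*} [SeminormedAddCommGroup E] {F : Set E}
    (hF : IsCompact F) {φ : E → ℝ} (hφ : ContinuousOn φ F) (hpos : ∀ u ∈ F, 0 < φ u) :
    ∀ᶠ δ in 𝓝[>] (0 : ℝ), ∀ u ∈ F, δ * ‖u‖ ≤ φ u := by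
  rcases F.eq_empty_or_nonempty with rfl | hne
  · simp
  obtain ⟨u₀, hu₀, hmin⟩ := hF.exists_isMinOn hne hφ
  obtain ⟨R, hR⟩ := hF.isBounded.exists_norm_le
  have hsmall : ∀ᶠ δ in 𝓝 (0 : ℝ), δ * R < φ u₀ := by
    have : Tendsto (fun δ : ℝ => δ * R) (𝓝 0) (𝓝 0) :=
      (by fun_prop : Continuous fun δ : ℝ => δ * R).tendsto' 0 0 (by simp)
    exact this (gt_mem_nhds (hpos u₀ hu₀))
  filter_upwards [nhdsWithin_le_nhds hsmall, self_mem_nhdsWithin] with δ hδR hδ u hu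
  calc δ * ‖u‖ ≤ δ * R := mul_le_mul_of_nonneg_left (hR u hu) (le_of_lt hδ)
    _ ≤ φ u₀ := hδR.le
    _ ≤ φ u := hmin hu

lemma eventually_mul_norm_le_on_cone {n : ℕ} {F : Set (Fin n → ℝ)} (hF : IsCompact F)
    {φ : (Fin n → ℝ) → ℝ} (hφc : ContinuousOn φ F)
    (hφh : ∀ t : ℝ, 0 < t → ∀ u ∈ F, φ (t • u) = t * φ u) (hpos : ∀ p ∈ cone F, 0 < φ p) :
    ∀ᶠ δ in 𝓝[>] (0 : ℝ), ∀ p ∈ cone F, δ * ‖p‖ ≤ φ p := by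
  have hposF : ∀ u ∈ F, 0 < φ u := fun u hu => hpos u ⟨1, one_pos, u, hu, (one_smul _ _).symm⟩
  filter_upwards [hF.eventually_mul_norm_le hφc hposF] with δ hδ
  rintro _ ⟨t, ht, u, hu, rfl⟩
  rw [norm_smul, hφh t ht u hu, Real.norm_of_nonneg ht.le, mul_left_comm]
  exact mul_le_mul_of_nonneg_left (hδ u hu) ht.le

lemma dotZ_smul {n : ℕ} (a : Fin n → ℤ) (t : ℝ) (x : Fin n → ℝ) :
    dotZ a (t • x) = t * dotZ a x := by
  simp only [dotZ, Finset.mul_sum, Pi.smul_apply, smul_eq_mul, mul_left_comm]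

lemma continuous_dotZ {n : ℕ} (a : Fin n → ℤ) : Continuous (dotZ a) :=
  continuous_finsetSum _ fun i _ => continuous_const.mul (continuous_apply i)

lemma exists_uniform_gap_on_cone {n : ℕ} {F : Set (Fin n → ℝ)} (hF : IsCompact F)
    (h0 : (0 : Fin n → ℝ) ∉ F) {g : (Fin n → ℝ) → (Fin n → ℝ)} (hgc : ContinuousOn g {p | p ≠ 0})
    (hgh : ∀ t : ℝ, 0 < t → ∀ p : Fin n → ℝ, p ≠ 0 → g (t • p) = t • g p)
    {B E : Finset (Fin n → ℤ)} (hB : B.Nonempty)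
    (hgap : ∀ p ∈ cone F, ∀ α ∈ E, dotZ α (g p) < B.sup' hB fun β => dotZ β (g p)) :
    ∃ δ : ℝ, 0 < δ ∧ ∀ p ∈ cone F, ∀ α ∈ E,
      dotZ α (g p) ≤ (B.sup' hB fun β => dotZ β (g p)) - δ * ‖p‖ := by
  have hne : ∀ u ∈ F, u ≠ 0 := fun u hu h => h0 (h ▸ hu)
  have hgF : ContinuousOn g F := hgc.mono hne
  have hgap_each : ∀ α ∈ E, ∀ᶠ δ in 𝓝[>] (0 : ℝ), ∀ p ∈ cone F,
      δ * ‖p‖ ≤ (B.sup' hB fun β => dotZ β (g p)) - dotZ α (g p) := by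
    intro α hα
    refine eventually_mul_norm_le_on_cone hF ?_ ?_ fun p hp => sub_pos.2 (hgap p hp α hα)
    · exact (ContinuousOn.finset_sup'_apply hB fun β _ =>
        (continuous_dotZ β).comp_continuousOn hgF).sub ((continuous_dotZ α).comp_continuousOn hgF)
    · intro t ht u hu
      simp only [hgh t ht u (hne u hu), dotZ_smul, mul_sub]
      congr 1
      rw [mul_comm t, Finset.sup'_mul₀ ht.le]
      simp only [mul_comm _ t]
  obtain ⟨δ, hδ, hδpos⟩ :=
    (((Finset.eventually_all E).2 hgap_each).and self_mem_nhdsWithin).exists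
  exact ⟨δ, hδpos, fun p hp α hα => by linarith [hδ α hα p hp]⟩

lemma Wpot_eq_ofReal_of_dotZ_int {n : ℕ} {B : Finset (Fin n → ℤ)} {c : (Fin n → ℤ) → ℂ}
    {x θ : Fin n → ℝ} (hc : ∀ β ∈ B, (c β).im = 0) (hθ : ∀ β ∈ B, ∃ m : ℤ, dotZ β θ = m) :
    Wpot B c x θ = ((∑ β ∈ B, (c β).re * Real.exp (dotZ β x) : ℝ) : ℂ) := by
  unfold Wpot
  push_cast
  refine Finset.sum_congr rfl fun β hβ => ?_
  obtain ⟨m, hm⟩ := hθ β hβ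
  rw [hm, Complex.exp_add, show 2 * (Real.pi : ℂ) * Complex.I * ((m : ℝ) : ℂ)
    = m * (2 * Real.pi * Complex.I) by push_cast; ring, Complex.exp_int_mul_two_pi_mul_I,
    mul_one, ← Complex.re_add_im (c β), hc β hβ]
  simp

lemma Wpot_sub_Wpot_of_subset {n : ℕ} {A B : Finset (Fin n → ℤ)} (h : B ⊆ A)
    (c : (Fin n → ℤ) → ℂ) (x θ : Fin n → ℝ) :
    Wpot A c x θ - Wpot B c x θ = Wpot (A \ B) c x θ := by
  rw [Wpot, Wpot, Wpot, ← Finset.sum_sdiff h, add_sub_cancel_right]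

lemma norm_Wpot_le {n : ℕ} {B : Finset (Fin n → ℤ)} {c : (Fin n → ℤ) → ℂ} {x θ : Fin n → ℝ}
    {L : ℝ} (hL : ∀ α ∈ B, dotZ α x ≤ L) :
    ‖Wpot B c x θ‖ ≤ (∑ α ∈ B, ‖c α‖) * Real.exp L := by
  rw [Finset.sum_mul]
  refine (norm_sum_le _ _).trans (Finset.sum_le_sum fun α hα => ?_)
  rw [norm_mul, Complex.norm_exp]
  gcongr
  simpa using hL α hα

lemma Finset.inf'_mul_exp_sup'_le_sum {ι : Type*} {s : Finset ι} (hs : s.Nonempty)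
    {w a : ι → ℝ} (hw : ∀ i ∈ s, 0 ≤ w i) :
    s.inf' hs w * Real.exp (s.sup' hs a) ≤ ∑ i ∈ s, w i * Real.exp (a i) := by
  obtain ⟨i, hi, hmax⟩ := s.exists_mem_eq_sup' hs a
  calc s.inf' hs w * Real.exp (s.sup' hs a) ≤ w i * Real.exp (a i) := by
        rw [hmax]; gcongr; exact s.inf'_le _ hi
    _ ≤ ∑ i ∈ s, w i * Real.exp (a i) :=
        Finset.single_le_sum (fun j hj => mul_nonneg (hw j hj) (Real.exp_pos _).le) hi

theorem stmt_3_general (n : ℕ)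
    (A : Finset (Fin n → ℤ))
    (hQ : (0 : Fin n → ℝ) ∈ interior (convexHull ℝ (toR '' (A : Set (Fin n → ℤ)))))
    (F : Set (Fin n → ℝ))
    (hFface : IsExtreme ℝ (convexHull ℝ (toR '' (A : Set (Fin n → ℤ)))) F)
    (hFproper : F ≠ convexHull ℝ (toR '' (A : Set (Fin n → ℤ))))
    (hAF : (A.filter fun α => toR α ∈ F).Nonempty)
    (g : (Fin n → ℝ) → (Fin n → ℝ))
    (hgc : ContinuousOn g {p | p ≠ 0})
    (hgh : ∀ t : ℝ, 0 < t → ∀ p : Fin n → ℝ, p ≠ 0 → g (t • p) = t • g p)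
    (hgap : ∀ p ∈ cone F, ∀ α ∈ A \ (A.filter fun α => toR α ∈ F),
      dotZ α (g p) < (A.filter fun α => toR α ∈ F).sup' hAF fun β => dotZ β (g p))
    (c : (Fin n → ℤ) → ℂ)
    (hcF : ∀ β ∈ (A.filter fun α => toR α ∈ F), ∃ r : ℝ, 0 < r ∧ c β = (r : ℂ)) :
    ∃ δ : ℝ, 0 < δ ∧ ∃ C : ℝ, 0 < C ∧
      ∀ p ∈ cone F, ∀ θ : Fin n → ℝ,
        (∀ β ∈ (A.filter fun α => toR α ∈ F), ∃ m : ℤ, dotZ β θ = (m : ℝ)) →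
        (∃ r : ℝ, 0 < r ∧ Wpot (A.filter fun α => toR α ∈ F) c (g p) θ = (r : ℂ)) ∧
        ‖Wpot A c (g p) θ - Wpot (A.filter fun α => toR α ∈ F) c (g p) θ‖ ≤
          C * Real.exp (-δ * ‖p‖) *
            (Wpot (A.filter fun α => toR α ∈ F) c (g p) θ).re := by
  set AF := A.filter fun α => toR α ∈ F
  have h0F : (0 : Fin n → ℝ) ∉ F := fun h0 =>
    hFproper (subset_antisymm hFface.1 (hFface.subset_of_mem_interior h0 hQ))
  have hFc : IsCompact F := by
    rw [← Finset.coe_image] at hFface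
    exact hFface.isCompact_of_convexHull_finset
  obtain ⟨δ, hδ, hgapδ⟩ := exists_uniform_gap_on_cone hFc h0F hgc hgh hAF hgap
  have hcre : ∀ β ∈ AF, 0 < (c β).re ∧ (c β).im = 0 := fun β hβ => by
    obtain ⟨r, hr, hcr⟩ := hcF β hβ
    simpa [hcr] using hr
  set m := AF.inf' hAF fun β => (c β).re
  have hm : 0 < m := (Finset.lt_inf'_iff _).2 fun β hβ => (hcre β hβ).1
  set S := ∑ α ∈ A \ AF, ‖c α‖
  refine ⟨δ, hδ, S / m + 1, by positivity, fun p hp θ hθ => ?_⟩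
  set M := AF.sup' hAF fun β => dotZ β (g p)
  have hlow : m * Real.exp M ≤ ∑ β ∈ AF, (c β).re * Real.exp (dotZ β (g p)) :=
    Finset.inf'_mul_exp_sup'_le_sum hAF fun β hβ => (hcre β hβ).1.le
  rw [Wpot_sub_Wpot_of_subset (Finset.filter_subset _ _),
    Wpot_eq_ofReal_of_dotZ_int (fun β hβ => (hcre β hβ).2) hθ, Complex.ofReal_re]
  refine ⟨⟨_, (by positivity : 0 < m * Real.exp M).trans_le hlow, rfl⟩, ?_⟩
  calc ‖Wpot (A \ AF) c (g p) θ‖ ≤ S * Real.exp (M - δ * ‖p‖) := norm_Wpot_le (hgapδ p hp)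
    _ = S / m * Real.exp (-δ * ‖p‖) * (m * Real.exp M) := by
        rw [sub_eq_add_neg, Real.exp_add]; field_simp
    _ ≤ (S / m + 1) * Real.exp (-δ * ‖p‖) * ∑ β ∈ AF, (c β).re * Real.exp (dotZ β (g p)) := by
        gcongr; linarith

/-- Let `A ⊂ ℤⁿ` be finite with `0` in the interior of `Q = conv(A)`,
`F` a proper face of `Q` with `A_F = A ∩ F` nonempty, and `g : ℝⁿ∖{0} → ℝⁿ` continuous
and positively homogeneous of degree 1 such that along `cone(F)` the exponents of
`A∖A_F` are dominated: `max_{α ∈ A∖A_F}⟨α, g p⟩ < max_{β ∈ A_F}⟨β, g p⟩`.  If `c_α ≠ 0`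
for all `α ∈ A` and `c_β` is a positive real for `β ∈ A_F`, then there are `δ, C > 0`
such that for all `p ∈ cone(F)` and all `θ` with `⟨β, θ⟩ ∈ ℤ` for every `β ∈ A_F`, the
partial sum `W_{A_F}(g p, θ)` is a positive real number and
`|W(g p, θ) − W_{A_F}(g p, θ)| ≤ C · exp(−δ‖p‖) · W_{A_F}(g p, θ)`. -/
theorem stmt_3 (n : ℕ) (hn : 1 ≤ n)
    (A : Finset (Fin n → ℤ))
    (hQ : (0 : Fin n → ℝ) ∈ interior (convexHull ℝ (toR '' (A : Set (Fin n → ℤ)))))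
    (F : Set (Fin n → ℝ))
    (hFface : IsExtreme ℝ (convexHull ℝ (toR '' (A : Set (Fin n → ℤ)))) F)
    (hFproper : F ≠ convexHull ℝ (toR '' (A : Set (Fin n → ℤ))))
    (hAF : (A.filter fun α => toR α ∈ F).Nonempty)
    (g : (Fin n → ℝ) → (Fin n → ℝ))
    (hgc : ContinuousOn g {p | p ≠ 0})
    (hgh : ∀ t : ℝ, 0 < t → ∀ p : Fin n → ℝ, p ≠ 0 → g (t • p) = t • g p)
    (hgap : ∀ p ∈ cone F, ∀ α ∈ A \ (A.filter fun α => toR α ∈ F),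
      dotZ α (g p) < (A.filter fun α => toR α ∈ F).sup' hAF fun β => dotZ β (g p))
    (c : (Fin n → ℤ) → ℂ)
    (hc : ∀ α ∈ A, c α ≠ 0)
    (hcF : ∀ β ∈ (A.filter fun α => toR α ∈ F), ∃ r : ℝ, 0 < r ∧ c β = (r : ℂ)) :
    ∃ δ : ℝ, 0 < δ ∧ ∃ C : ℝ, 0 < C ∧
      ∀ p ∈ cone F, ∀ θ : Fin n → ℝ,
        (∀ β ∈ (A.filter fun α => toR α ∈ F), ∃ m : ℤ, dotZ β θ = (m : ℝ)) →
        (∃ r : ℝ, 0 < r ∧ Wpot (A.filter fun α => toR α ∈ F) c (g p) θ = (r : ℂ)) ∧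
        ‖Wpot A c (g p) θ - Wpot (A.filter fun α => toR α ∈ F) c (g p) θ‖ ≤
          C * Real.exp (-δ * ‖p‖) *
            (Wpot (A.filter fun α => toR α ∈ F) c (g p) θ).re :=
  stmt_3_general n A hQ F hFface hFproper hAF g hgc hgh hgap c hcF

end
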